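/- arXiv:1812.02203 — 6 statements merged into one kernel-verified Lean document; each statement's English description precedes it below -/
import Mathlib

section
/- Let $p \geq 1$ and let $a, k, l$ be integers with $0 \leq pa \leq k < l \leq p(a+1)$. Then the matrices $(J_k \oplus J_l)^p$ and $(J_{k+1} \oplus J_{l-1})^p$ are similar. -/
/-!
The `p`-th power of a nilpotent Jordan block of size `m` is, up to relabelling the basis, the
direct sum of the shift chains formed by the indices in each residue class mod `p`. Writing
`k = p a + s` and `l = p a + t` with `s < t ≤ p`, the chain of residue `s` in the first block has
length `a` and the chain of residue `t - 1` in the second block has length `a + 1`; exchanging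
these two chains turns the chain structure of `(J k ⊕ J l)^p` into that of
`(J (k + 1) ⊕ J (l - 1))^p`. So the two matrices differ only by a permutation of the basis.
-/

/-- The nilpotent Jordan block of size `k`. -/
def J (k : ℕ) : Matrix (Fin k) (Fin k) ℂ :=
  fun i j => if (i : ℕ) + 1 = (j : ℕ) then 1 else 0

/-- Two square complex matrices (over possibly different index types) are similar. -/
def MatSimilar {m n : Type} [Fintype m] [Fintype n] [DecidableEq m] [DecidableEq n]
    (A : Matrix m m ℂ) (B : Matrix n n ℂ) : Prop :=
  ∃ e : m ≃ n, ∃ P : Matrix n n ℂ, IsUnit P ∧ B = P * (A.submatrix e.symm e.symm) * P⁻¹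

lemma matSimilar_of_apply_eq {m n : Type} [Fintype m] [Fintype n] [DecidableEq m]
    [DecidableEq n] {A : Matrix m m ℂ} {B : Matrix n n ℂ} (e : m ≃ n)
    (h : ∀ u v, A u v = B (e u) (e v)) : MatSimilar A B :=
  ⟨e, 1, isUnit_one, by ext u v; simp [h]⟩

lemma J_pow_apply (m p : ℕ) (i j : Fin m) :
    (J m ^ p) i j = if (i : ℕ) + p = j then 1 else 0 := by
  induction p generalizing j with
  | zero => simp [Matrix.one_apply, Fin.ext_iff]
  | succ p ih =>
    simp only [pow_succ, Matrix.mul_apply, ih, J, ite_mul, one_mul, zero_mul]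
    by_cases h : (i : ℕ) + p < m
    · rw [Finset.sum_eq_single_of_mem ⟨(i : ℕ) + p, h⟩ (Finset.mem_univ _)]
      · simp [add_assoc]
      · intro x _ hx
        rw [if_neg fun hx' => hx (Fin.ext hx'.symm)]
    · rw [Finset.sum_eq_zero fun x _ => if_neg (by omega), if_neg (by omega)]

lemma fromBlocks_zero_pow {α m n : Type*} [Fintype m] [Fintype n] [DecidableEq m]
    [DecidableEq n] [Semiring α] (A : Matrix m m α) (B : Matrix n n α) (p : ℕ) :
    Matrix.fromBlocks A 0 0 B ^ p = Matrix.fromBlocks (A ^ p) 0 0 (B ^ p) := by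
  induction p with
  | zero => simp [Matrix.fromBlocks_one]
  | succ p ih => simp [pow_succ, ih, Matrix.fromBlocks_multiply]

lemma fromBlocks_J_pow_apply (m n p : ℕ) (u v : Fin m ⊕ Fin n) :
    (Matrix.fromBlocks (J m) 0 0 (J n) ^ p) u v =
      if Sum.LiftRel (· + p = ·) (· + p = ·) (Sum.map Fin.val Fin.val u)
        (Sum.map Fin.val Fin.val v) then 1 else 0 := by
  rw [fromBlocks_zero_pow]
  rcases u with i | i <;> rcases v with j | j <;> simp [J_pow_apply]

def finSumFinEquivBox (m n : ℕ) :
    Fin m ⊕ Fin n ≃ {x : ℕ ⊕ ℕ // Sum.elim (· < m) (· < n) x} :=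
  (Fin.equivSubtype.sumCongr Fin.equivSubtype).trans
    (Equiv.subtypeSum (p := Sum.elim (· < m) (· < n))).symm

@[simp]
lemma coe_finSumFinEquivBox (m n : ℕ) (u : Fin m ⊕ Fin n) :
    (finSumFinEquivBox m n u : ℕ ⊕ ℕ) = Sum.map Fin.val Fin.val u := by
  cases u <;> rfl

lemma map_val_finSumFinEquivBox_symm {m n : ℕ}
    (x : {x : ℕ ⊕ ℕ // Sum.elim (· < m) (· < n) x}) :
    Sum.map Fin.val Fin.val ((finSumFinEquivBox m n).symm x) = x := by
  rw [← coe_finSumFinEquivBox, Equiv.apply_symm_apply]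

lemma matSimilar_fromBlocks_J_pow_of_perm {m n m' n' p : ℕ} (σ : Equiv.Perm (ℕ ⊕ ℕ))
    (hbox : ∀ x, Sum.elim (· < m) (· < n) x ↔ Sum.elim (· < m') (· < n') (σ x))
    (hrel : ∀ x y, Sum.LiftRel (· + p = ·) (· + p = ·) (σ x) (σ y) ↔
      Sum.LiftRel (· + p = ·) (· + p = ·) x y) :
    MatSimilar (Matrix.fromBlocks (J m) 0 0 (J n) ^ p)
      (Matrix.fromBlocks (J m') 0 0 (J n') ^ p) := by
  let e := (finSumFinEquivBox m n).trans <|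
    (σ.subtypeEquiv hbox).trans (finSumFinEquivBox m' n').symm
  have he (u) : Sum.map Fin.val Fin.val (e u) = σ (Sum.map Fin.val Fin.val u) := by
    simp [e, map_val_finSumFinEquivBox_symm]
  refine matSimilar_of_apply_eq e fun u v => ?_
  simp only [fromBlocks_J_pow_apply, he, hrel]

lemma Nat.sub_add_mod_of_mod_eq {p i c d : ℕ} (hi : i % p = c) (hd : d < p) :
    (i - c + d) % p = d := by
  have : i - c = p * (i / p) := by have := Nat.div_add_mod i p; omega
  rw [this, Nat.mul_add_mod, Nat.mod_eq_of_lt hd]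

def swapResidues (p c d : ℕ) : ℕ ⊕ ℕ → ℕ ⊕ ℕ
  | .inl i => if i % p = c then .inr (i - c + d) else .inl i
  | .inr j => if j % p = d then .inl (j - d + c) else .inr j

section swapResidues

variable {p c d : ℕ}

lemma swapResidues_involutive (hc : c < p) (hd : d < p) :
    Function.Involutive (swapResidues p c d) := by
  rintro (i | j)
  · by_cases hi : i % p = c
    · have : c ≤ i := hi ▸ Nat.mod_le i p
      simp only [swapResidues, hi, ↓reduceIte, Nat.sub_add_mod_of_mod_eq hi hd, Sum.inl.injEq]
      omega
    · simp [swapResidues, hi]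
  · by_cases hj : j % p = d
    · have : d ≤ j := hj ▸ Nat.mod_le j p
      simp only [swapResidues, hj, ↓reduceIte, Nat.sub_add_mod_of_mod_eq hj hc, Sum.inr.injEq]
      omega
    · simp [swapResidues, hj]

lemma liftRel_swapResidues {x y : ℕ ⊕ ℕ} (h : Sum.LiftRel (· + p = ·) (· + p = ·) x y) :
    Sum.LiftRel (· + p = ·) (· + p = ·) (swapResidues p c d x) (swapResidues p c d y) := by
  cases h with
  | @inl i _ h =>
    subst h
    by_cases hi : i % p = c
    · have : c ≤ i := hi ▸ Nat.mod_le i p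
      simp only [swapResidues, hi, ↓reduceIte, Nat.add_mod_right, Sum.liftRel_inr_inr]
      omega
    · simp [swapResidues, hi]
  | @inr j _ h =>
    subst h
    by_cases hj : j % p = d
    · have : d ≤ j := hj ▸ Nat.mod_le j p
      simp only [swapResidues, hj, ↓reduceIte, Nat.add_mod_right, Sum.liftRel_inl_inl]
      omega
    · simp [swapResidues, hj]

lemma liftRel_swapResidues_iff (hc : c < p) (hd : d < p) {x y : ℕ ⊕ ℕ} :
    Sum.LiftRel (· + p = ·) (· + p = ·) (swapResidues p c d x) (swapResidues p c d y) ↔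
      Sum.LiftRel (· + p = ·) (· + p = ·) x y := by
  refine ⟨fun h => ?_, liftRel_swapResidues⟩
  simpa only [swapResidues_involutive hc hd _] using liftRel_swapResidues (c := c) (d := d) h

end swapResidues

lemma sumElim_lt_iff_swapResidues {p a s t : ℕ} (hst : s < t) (htp : t ≤ p) (x : ℕ ⊕ ℕ) :
    Sum.elim (· < p * a + s) (· < p * a + t) x ↔
      Sum.elim (· < p * a + s + 1) (· < p * a + t - 1) (swapResidues p s (t - 1) x) := by
  have hmod {r : ℕ} (hr : r < p) : (p * a + r) % p = r := by
    rw [Nat.mul_add_mod, Nat.mod_eq_of_lt hr]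
  rcases x with i | j
  · by_cases hi : i % p = s
    · have : s ≤ i := hi ▸ Nat.mod_le i p
      simp only [swapResidues, hi, if_true, Sum.elim_inl, Sum.elim_inr]; omega
    · have : i ≠ p * a + s := fun h => hi (h ▸ hmod (by omega))
      simp only [swapResidues, hi, if_false, Sum.elim_inl]; omega
  · by_cases hj : j % p = t - 1
    · have : t - 1 ≤ j := hj ▸ Nat.mod_le j p
      simp only [swapResidues, hj, if_true, Sum.elim_inl, Sum.elim_inr]; omega
    · have : j ≠ p * a + (t - 1) := fun h => hj (h ▸ hmod (by omega))
      simp only [swapResidues, hj, if_false, Sum.elim_inr]; omega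

theorem stmt1_general (p a k l : ℕ) (h1 : p * a ≤ k) (h2 : k < l)
    (h3 : l ≤ p * (a + 1)) :
    MatSimilar ((Matrix.fromBlocks (J k) 0 0 (J l)) ^ p)
      ((Matrix.fromBlocks (J (k + 1)) 0 0 (J (l - 1))) ^ p) := by
  obtain ⟨s, rfl⟩ : ∃ s, k = p * a + s := ⟨k - p * a, by omega⟩
  obtain ⟨t, rfl⟩ : ∃ t, l = p * a + t := ⟨l - p * a, by omega⟩
  have hst : s < t := by omega
  have htp : t ≤ p := by rw [mul_add, mul_one] at h3; omega
  exact matSimilar_fromBlocks_J_pow_of_perm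
    (swapResidues_involutive (p := p) (c := s) (d := t - 1) (by omega) (by omega)).toPerm
    (sumElim_lt_iff_swapResidues hst htp) fun _ _ => liftRel_swapResidues_iff (by omega) (by omega)

/-- If `0 ≤ p*a ≤ k < l ≤ p*(a+1)` then `(J k ⊕ J l)^p` and `(J (k+1) ⊕ J (l-1))^p`
are similar. -/
theorem stmt1 (p a k l : ℕ) (hp : 1 ≤ p) (h1 : p * a ≤ k) (h2 : k < l)
    (h3 : l ≤ p * (a + 1)) :
    MatSimilar ((Matrix.fromBlocks (J k) 0 0 (J l)) ^ p)
      ((Matrix.fromBlocks (J (k + 1)) 0 0 (J (l - 1))) ^ p) :=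
  stmt1_general p a k l h1 h2 h3
end

section
/- Let $\mathbb{F}$ be $\mathbb{R}$ or $\mathbb{C}$, let $A \in M_n(\mathbb{F})$, and let $S(A)$ be the similarity class of $A$. Then the map $\pi : GL_n(\mathbb{F}) \to S(A)$, $P \mapsto PAP^{-1}$, admits a local continuous cross-section around $A$: there is a neighborhood $U$ of $A$ in $S(A)$ and a continuous map $g : U \to GL_n(\mathbb{F})$ with $g(A) = I_n$ and $B = g(B) A g(B)^{-1}$ for all $B \in U$. -/
/-!
Write `Φ_B X = B X - X A`; an invertible `Q` satisfies `B = Q A Q⁻¹` iff `Q ∈ ker Φ_B`, and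
`1 ∈ ker Φ_A`. Choose a retraction `ρ` onto `ker Φ_A` and `ψ` with `ψ Φ_A = id - ρ`, so that
`T_B = ψ Φ_B + ρ` is a continuous family of operators with `T_A = id`, and put `g B = T_B⁻¹ 1`,
which is continuous near `A`. On `ker Φ_B` the operator `T_B` reduces to `ρ`; on the similarity
class `ker Φ_{PAP⁻¹} = P · ker Φ_A` has the dimension of `ker Φ_A`, so the injective map
`ρ : ker Φ_B → ker Φ_A` is onto, and `T_B⁻¹ 1` lies in `ker Φ_B`.
-/

open Module Filter Topology LinearMap

namespace LinearMap

variable {K V V' V'' : Type*} [Field K] [AddCommGroup V] [Module K V] [AddCommGroup V']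
  [Module K V'] [AddCommGroup V''] [Module K V'']

theorem exists_comp_eq_of_ker_le (f : V →ₗ[K] V') (g : V →ₗ[K] V'') (h : ker f ≤ ker g) :
    ∃ ψ : V' →ₗ[K] V'', ψ ∘ₗ f = g := by
  obtain ⟨ψ, hψ⟩ := exists_extend ((ker f).liftQ g h ∘ₗ f.quotKerEquivRange.symm.toLinearMap)
  refine ⟨ψ, LinearMap.ext fun x => ?_⟩
  simpa [quotKerEquivRange_symm_apply_image] using congr($hψ ⟨f x, mem_range_self f x⟩)

theorem exists_comp_add_retraction_eq_id (f : V →ₗ[K] V') :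
    ∃ (ψ : V' →ₗ[K] V) (ρ : V →ₗ[K] ker f), ψ ∘ₗ f + (ker f).subtype ∘ₗ ρ = id := by
  obtain ⟨ρ, hρ⟩ := (ker f).subtype.exists_leftInverse_of_injective (ker f).ker_subtype
  obtain ⟨ψ, hψ⟩ := exists_comp_eq_of_ker_le f (id - (ker f).subtype ∘ₗ ρ) fun x hx => by
    simpa [sub_eq_zero] using congr(((ker f).subtype ($hρ ⟨x, hx⟩))).symm
  exact ⟨ψ, ρ, by rw [hψ, sub_add_cancel]⟩

theorem le_map_ker_of_injective_comp_add [FiniteDimensional K V] {p : Submodule K V}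
    (f : V →ₗ[K] V') (ψ : V' →ₗ[K] V) (ρ : V →ₗ[K] p)
    (hinj : Function.Injective (ψ ∘ₗ f + p.subtype ∘ₗ ρ))
    (hdim : finrank K p ≤ finrank K (ker f)) :
    p ≤ (ker f).map (ψ ∘ₗ f + p.subtype ∘ₗ ρ) := by
  have hρ : Function.Injective (ρ ∘ₗ (ker f).subtype) := by
    intro x y hxy
    apply Subtype.ext
    apply hinj
    simpa [x.2, y.2] using congr(($hxy : V))
  have hsurj := (injective_iff_surjective_of_finrank_eq_finrank
    (le_antisymm (finrank_le_finrank_of_injective hρ) hdim)).1 hρ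
  intro v hv
  obtain ⟨y, hy⟩ := hsurj ⟨v, hv⟩
  exact ⟨y, y.2, by simpa [y.2] using congr(($hy : V))⟩

theorem exists_eventually_continuousAt_mem_ker {𝕜 E F X : Type*} [NontriviallyNormedField 𝕜]
    [CompleteSpace 𝕜] [NormedAddCommGroup E] [NormedSpace 𝕜 E] [FiniteDimensional 𝕜 E]
    [NormedAddCommGroup F] [NormedSpace 𝕜 F] [FiniteDimensional 𝕜 F] [TopologicalSpace X]
    (L : X → E →ₗ[𝕜] F) (hL : ∀ e, Continuous fun x => L x e) (x₀ : X) {v : E}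
    (hv : L x₀ v = 0) :
    ∃ σ : X → E, σ x₀ = v ∧ ∀ᶠ x in 𝓝 x₀, ContinuousAt σ x ∧
      (finrank 𝕜 (ker (L x₀)) ≤ finrank 𝕜 (ker (L x)) → L x (σ x) = 0) := by
  obtain ⟨ψ, ρ, hid⟩ := (L x₀).exists_comp_add_retraction_eq_id
  have := FiniteDimensional.complete 𝕜 E
  let T : X → E →L[𝕜] E := fun x => (ψ ∘ₗ L x + (ker (L x₀)).subtype ∘ₗ ρ).toContinuousLinearMap
  have hT : Continuous T := continuous_clm_apply.2 fun e =>
    (ψ.continuous_of_finiteDimensional.comp (hL e)).add continuous_const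
  have hT₀ : T x₀ = 1 := by
    ext e
    simpa [T] using congr($hid e)
  have hunit : ∀ᶠ x in 𝓝 x₀, IsUnit (T x) :=
    hT.continuousAt.eventually (Units.isOpen.mem_nhds (hT₀ ▸ isUnit_one))
  refine ⟨fun x => Ring.inverse (T x) v, by simp [hT₀],
    hunit.mono fun x hx => ⟨?_, fun hdim => ?_⟩⟩
  · exact ((NormedRing.inverse_continuousAt hx.unit).comp_of_eq hT.continuousAt
      hx.unit_spec.symm).clm_apply continuousAt_const
  · obtain ⟨y, hy, hTy⟩ := le_map_ker_of_injective_comp_add (L x) ψ ρ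
      (ContinuousLinearMap.isUnit_iff_bijective.1 hx).1 hdim hv
    have hσ : Ring.inverse (T x) v = y := by
      rw [← hTy]
      exact congr($(Ring.inverse_mul_cancel _ hx) y)
    simpa [hσ] using hy

theorem finrank_ker_mulLeft_conj_sub_mulRight {K R : Type*} [Field K] [Ring R] [Algebra K R]
    (u : Rˣ) (a : R) :
    finrank K (ker (mulLeft K (u * a * ↑u⁻¹) - mulRight K a)) =
      finrank K (ker (mulLeft K a - mulRight K a)) := by
  have hker : ker (mulLeft K (u * a * ↑u⁻¹) - mulRight K a) =
      (ker (mulLeft K a - mulRight K a)).map (mulLeft K (u : R)) := by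
    ext x
    simp only [mem_ker, sub_apply, mulLeft_apply, mulRight_apply, Submodule.mem_map, sub_eq_zero]
    constructor
    · intro hx
      refine ⟨↑u⁻¹ * x, ?_, by simp⟩
      calc a * (↑u⁻¹ * x) = ↑u⁻¹ * (u * a * ↑u⁻¹ * x) := by simp [mul_assoc]
        _ = ↑u⁻¹ * x * a := by rw [hx, mul_assoc]
    · rintro ⟨y, hy, rfl⟩
      simp [mul_assoc, hy]
  rw [hker]
  exact (Submodule.equivMapOfInjective _ u.isUnit.mul_right_injective _).finrank_eq.symm

end LinearMap

/-- For `𝕜 = ℝ` or `ℂ` and `A` an `n × n` matrix, the conjugation map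
`P ↦ P A P⁻¹` from `GLₙ(𝕜)` onto the similarity class `S(A)` of `A` admits a continuous
local cross-section `g` around `A`, with `g A = 1`. -/
theorem stmt9 {𝕜 : Type} [RCLike 𝕜] (n : ℕ) (A : Matrix (Fin n) (Fin n) 𝕜) :
    ∃ U : Set (Matrix (Fin n) (Fin n) 𝕜),
      ∃ g : Matrix (Fin n) (Fin n) 𝕜 → Matrix (Fin n) (Fin n) 𝕜,
        U ⊆ {B | ∃ P : Matrix (Fin n) (Fin n) 𝕜, IsUnit P ∧ B = P * A * P⁻¹} ∧
        U ∈ nhdsWithin A {B | ∃ P : Matrix (Fin n) (Fin n) 𝕜, IsUnit P ∧ B = P * A * P⁻¹} ∧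
        ContinuousOn g U ∧ g A = 1 ∧
        ∀ B ∈ U, IsUnit (g B) ∧ B = g B * A * (g B)⁻¹ := by
  let _ := Matrix.normedAddCommGroup (n := Fin n) (m := Fin n) (α := 𝕜)
  let _ := Matrix.normedSpace (n := Fin n) (m := Fin n) (R := 𝕜) (α := 𝕜)
  obtain ⟨g, hgA, hg⟩ := exists_eventually_continuousAt_mem_ker
    (fun B => mulLeft 𝕜 B - mulRight 𝕜 A)
    (fun X => by simp only [LinearMap.sub_apply, mulLeft_apply, mulRight_apply]; fun_prop)
    A (v := 1) (by simp)
  have hunit : ∀ᶠ B in 𝓝 A, IsUnit (g B) := by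
    have hdet : ContinuousAt (fun B => (g B).det) A :=
      continuous_id.matrix_det.continuousAt.comp hg.self_of_nhds.1
    filter_upwards [hdet.eventually_ne (by simp [hgA] : (g A).det ≠ 0)] with B hB
    exact (Matrix.isUnit_iff_isUnit_det _).2 (isUnit_iff_ne_zero.2 hB)
  obtain ⟨W, hW, hWg⟩ := (hg.and hunit).exists_mem
  refine ⟨_ ∩ W, g, Set.inter_subset_left, inter_mem_nhdsWithin _ hW,
    fun B hB => (hWg B hB.2).1.1.continuousWithinAt, hgA, ?_⟩
  rintro B ⟨⟨P, hP, hBP⟩, hBW⟩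
  obtain ⟨⟨-, hker⟩, hgB⟩ := hWg B hBW
  have hdim := finrank_ker_mulLeft_conj_sub_mulRight (K := 𝕜) hP.unit A
  rw [Matrix.coe_units_inv, hP.unit_spec, ← hBP] at hdim
  have hcomm : B * g B = g B * A := sub_eq_zero.1 (hker hdim.ge)
  refine ⟨hgB, ?_⟩
  calc B = B * g B * (g B)⁻¹ :=
        (Matrix.mul_nonsing_inv_cancel_right _ _ ((Matrix.isUnit_iff_isUnit_det _).1 hgB)).symm
    _ = g B * A * (g B)⁻¹ := by rw [hcomm]
end

section
/- Let $V$ be a finite-dimensional vector space over $\mathbb{F} \in \{\mathbb{R}, \mathbb{C}\}$, let $u \in \mathrm{End}(V)$, and let $x_0 \in V$ be a non-zero vector with $u(x_0) = 0$. Then there exists an open neighborhood $U$ of $u$ in $\mathrm{End}(V)$ and a continuous map $f : U \to V$ such that $f(u) = x_0$ and $v(f(v)) = 0$ for every $v \in U$ having the same rank as $u$. -/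
/-!
Pick a complement `C` of `range u` and a map `j` with `range j ≤ C` sending `ker u` isomorphically
onto `C`, so that `u + j` is invertible. Then `f v := (v + j)⁻¹ (j x₀)` is continuous near `u`,
`f u = x₀`, and `v (f v) = j (x₀ - f v)` lies in `C`. If `W` is a complement of `ker u`, the
projection of `v` onto `range u` along `C` stays injective on `W` for `v` near `u`; when
`rank v = rank u` this forces `range v = v W` to meet `C` trivially, hence `v (f v) = 0`.
-/

open Module LinearMap Filter Topology

theorem LinearMap.injective_add_of_disjoint {R M N : Type*} [Ring R] [AddCommGroup M]
    [AddCommGroup N] [Module R M] [Module R N] {f g : M →ₗ[R] N}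
    (hrange : Disjoint (range f) (range g)) (hker : Disjoint (ker f) (ker g)) :
    Function.Injective (f + g) := by
  refine (injective_iff_map_eq_zero _).2 fun z hz => ?_
  have hfz : f z = 0 := by
    refine Submodule.disjoint_def.1 hrange _ (mem_range_self f z) ?_
    rw [eq_neg_of_add_eq_zero_left hz]
    exact neg_mem (mem_range_self g z)
  have hgz : g z = 0 := by simpa [hfz] using hz
  exact Submodule.disjoint_def.1 hker z hfz hgz

section FiniteDimensional

variable {K V M : Type*} [DivisionRing K] [AddCommGroup V] [Module K V] [AddCommGroup M]
  [Module K M] [FiniteDimensional K V]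

theorem LinearMap.finrank_ker_eq_of_isCompl_range {u : V →ₗ[K] V} {C : Submodule K V}
    (hC : IsCompl (range u) C) : finrank K (ker u) = finrank K C := by
  have := u.finrank_range_add_finrank_ker
  have := Submodule.finrank_add_eq_of_isCompl hC
  omega

theorem LinearMap.finrank_range_eq_of_isCompl_ker {u : V →ₗ[K] M} {W : Submodule K V}
    (hW : IsCompl (ker u) W) : finrank K (range u) = finrank K W := by
  have := u.finrank_range_add_finrank_ker
  have := Submodule.finrank_add_eq_of_isCompl hW
  omega

theorem LinearMap.exists_range_le_injective_add (u : V →ₗ[K] V) {C : Submodule K V}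
    (hC : IsCompl (range u) C) : ∃ j : V →ₗ[K] V, range j ≤ C ∧ Function.Injective (u + j) := by
  obtain ⟨W, hW⟩ := (ker u).exists_isCompl
  let e : ker u ≃ₗ[K] C := LinearEquiv.ofFinrankEq _ _ (finrank_ker_eq_of_isCompl_range hC)
  let j : V →ₗ[K] V := C.subtype ∘ₗ e.toLinearMap ∘ₗ (ker u).projectionOnto W hW
  have hjC : range j ≤ C := (range_comp_le_range _ _).trans (by rw [Submodule.range_subtype])
  have hj : ker j = W := by simp [j, ker_comp]
  exact ⟨j, hjC, injective_add_of_disjoint (hC.disjoint.mono_right hjC) (hj ▸ hW.disjoint)⟩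

theorem LinearMap.disjoint_range_of_injective_projection_comp {R C : Submodule K M}
    (hC : IsCompl R C) {W : Submodule K V} (v : V →ₗ[K] M)
    (hinj : Function.Injective (R.projection C hC ∘ₗ v ∘ₗ W.subtype))
    (hdim : finrank K (range v) ≤ finrank K W) : Disjoint (range v) C := by
  have hvW : Function.Injective (v ∘ₗ W.subtype) :=
    Function.Injective.of_comp (f := R.projection C hC) hinj
  have hrange : range (v ∘ₗ W.subtype) = range v :=
    Submodule.eq_of_le_of_finrank_le (range_comp_le_range _ _)
      (by rwa [finrank_range_of_inj hvW])
  rw [← hrange, Submodule.disjoint_def]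
  rintro _ ⟨w, rfl⟩ hwC
  have hw : w = 0 := hinj (by simpa using Submodule.projection_apply_of_mem_right hC hwC)
  simp [hw]

end FiniteDimensional

namespace ContinuousLinearMap

variable {𝕜 V : Type*} [NontriviallyNormedField 𝕜] [NormedAddCommGroup V] [NormedSpace 𝕜 V]

theorem exists_range_le_isUnit_add [CompleteSpace 𝕜] [FiniteDimensional 𝕜 V] (u : V →L[𝕜] V)
    {C : Submodule 𝕜 V} (hC : IsCompl (range (u : V →ₗ[𝕜] V)) C) :
    ∃ j : V →L[𝕜] V, range (j : V →ₗ[𝕜] V) ≤ C ∧ IsUnit (u + j) := by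
  have : CompleteSpace V := FiniteDimensional.complete 𝕜 V
  obtain ⟨j, hjC, hj⟩ := (u : V →ₗ[𝕜] V).exists_range_le_injective_add hC
  refine ⟨j.toContinuousLinearMap, hjC, isUnit_iff_bijective.2 ⟨hj, ?_⟩⟩
  exact injective_iff_surjective.1 hj

theorem eventually_disjoint_range_of_finrank_eq [CompleteSpace 𝕜] [FiniteDimensional 𝕜 V]
    (u : V →L[𝕜] V) {C : Submodule 𝕜 V} (hC : IsCompl (range (u : V →ₗ[𝕜] V)) C) :
    ∀ᶠ v : V →L[𝕜] V in 𝓝 u,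
      finrank 𝕜 (range (v : V →ₗ[𝕜] V)) = finrank 𝕜 (range (u : V →ₗ[𝕜] V)) →
        Disjoint (range (v : V →ₗ[𝕜] V)) C := by
  obtain ⟨W, hW⟩ := (ker (u : V →ₗ[𝕜] V)).exists_isCompl
  let π : V →L[𝕜] V := ((range (u : V →ₗ[𝕜] V)).projection C hC).toContinuousLinearMap
  let Φ : (V →L[𝕜] V) → (W →L[𝕜] V) := fun v => π ∘L v ∘L W.subtypeL
  have hΦ : Continuous Φ := by fun_prop
  have hΦu : Function.Injective (Φ u) := by
    refine (injective_iff_map_eq_zero _).2 fun w hw => ?_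
    have huw : u w = 0 :=
      Submodule.disjoint_def.1 hC.disjoint _ (mem_range_self _ _) (by simpa [Φ, π] using hw)
    exact Subtype.ext (Submodule.disjoint_def.1 hW.disjoint w huw w.2)
  filter_upwards [hΦ.continuousAt.preimage_mem_nhds (isOpen_injective.mem_nhds hΦu)]
    with v hv hrank
  exact disjoint_range_of_injective_projection_comp hC _ hv
    (by rw [hrank, finrank_range_eq_of_isCompl_ker hW])

variable (j : V →L[𝕜] V)

theorem continuousOn_ring_inverse_add_apply [CompleteSpace V] (y : V) :
    ContinuousOn (fun v => Ring.inverse (v + j) y) {v | IsUnit (v + j)} := by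
  intro v hv
  have hinv : ContinuousAt Ring.inverse (v + j) :=
    hv.unit_spec ▸ NormedRing.inverse_continuousAt hv.unit
  exact ((apply 𝕜 V y).continuous.continuousAt.comp
    (hinv.comp_of_eq (continuous_add_const j).continuousAt rfl)).continuousWithinAt

theorem ring_inverse_add_apply_apply_of_apply_eq_zero {u : V →L[𝕜] V} (hu : IsUnit (u + j))
    {x : V} (hx : u x = 0) : Ring.inverse (u + j) (j x) = x := by
  have hujx : (u + j) x = j x := by simp [hx]
  rw [← hujx, ← mul_apply_eq_comp, Ring.inverse_mul_cancel _ hu, one_apply_eq_self]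

theorem apply_ring_inverse_add_apply_mem_range {v : V →L[𝕜] V} (hv : IsUnit (v + j)) (x : V) :
    v (Ring.inverse (v + j) (j x)) ∈ range (j : V →ₗ[𝕜] V) := by
  set y := Ring.inverse (v + j) (j x)
  have hy : v y + j y = j x := by
    rw [← _root_.add_apply, ← mul_apply_eq_comp, Ring.mul_inverse_cancel _ hv, one_apply_eq_self]
  exact ⟨x - y, by simp [← hy]⟩

end ContinuousLinearMap

theorem stmt10_general {𝕜 : Type} [RCLike 𝕜] {V : Type} [NormedAddCommGroup V]
    [NormedSpace 𝕜 V] [FiniteDimensional 𝕜 V] (u : V →L[𝕜] V) (x₀ : V)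
    (hux₀ : u x₀ = 0) :
    ∃ U : Set (V →L[𝕜] V), IsOpen U ∧ u ∈ U ∧
      ∃ f : (V →L[𝕜] V) → V, ContinuousOn f U ∧ f u = x₀ ∧
        ∀ v ∈ U, Module.finrank 𝕜 (LinearMap.range (v : V →ₗ[𝕜] V)) =
            Module.finrank 𝕜 (LinearMap.range (u : V →ₗ[𝕜] V)) →
          v (f v) = 0 := by
  have : CompleteSpace V := FiniteDimensional.complete 𝕜 V
  obtain ⟨C, hC⟩ := (LinearMap.range (u : V →ₗ[𝕜] V)).exists_isCompl
  obtain ⟨j, hjC, hj⟩ := u.exists_range_le_isUnit_add hC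
  obtain ⟨U, hU, hUopen, huU⟩ := eventually_nhds_iff.1 <|
    (u.eventually_disjoint_range_of_finrank_eq hC).and
      ((Units.isOpen.preimage (continuous_add_const j)).mem_nhds hj)
  refine ⟨U, hUopen, huU, fun v => Ring.inverse (v + j) (j x₀),
    (j.continuousOn_ring_inverse_add_apply _).mono fun v hv => (hU v hv).2,
    j.ring_inverse_add_apply_apply_of_apply_eq_zero hj hux₀, fun v hv hrank => ?_⟩
  exact Submodule.disjoint_def.1 ((hU v hv).1 hrank) _ (mem_range_self _ _)
    (hjC (j.apply_ring_inverse_add_apply_mem_range (hU v hv).2 x₀))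

/-- If `u` is an endomorphism of a finite-dimensional space `V` over `𝕜 = ℝ` or `ℂ`
and `x₀ ≠ 0` satisfies `u x₀ = 0`, there is an open neighborhood `U` of `u` in `End(V)`
and a continuous map `f : U → V` with `f u = x₀` and `v (f v) = 0` for every `v ∈ U`
with the same rank as `u`. -/
theorem stmt10 {𝕜 : Type} [RCLike 𝕜] {V : Type} [NormedAddCommGroup V]
    [NormedSpace 𝕜 V] [FiniteDimensional 𝕜 V] (u : V →L[𝕜] V) (x₀ : V)
    (hx₀ : x₀ ≠ 0) (hux₀ : u x₀ = 0) :
    ∃ U : Set (V →L[𝕜] V), IsOpen U ∧ u ∈ U ∧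
      ∃ f : (V →L[𝕜] V) → V, ContinuousOn f U ∧ f u = x₀ ∧
        ∀ v ∈ U, Module.finrank 𝕜 (LinearMap.range (v : V →ₗ[𝕜] V)) =
            Module.finrank 𝕜 (LinearMap.range (u : V →ₗ[𝕜] V)) →
          v (f v) = 0 :=
  stmt10_general u x₀ hux₀
end

section
/- Let $p \geq 1$. For a profile $m \in \mathbb{Z}^{(\mathbb{N}^*)}$ (a finitely supported sequence of integers indexed by positive integers) define $S(m) = \sum_{k \geq 1} k\, m_k$ and $m^{[p]} = \big(\sum_{-p < k < p} (p - |k|)\, m_{pa+k}\big)_{a \geq 1}$ (with $m_j = 0$ for $j \leq 0$). Then $S(m^{[p]}) = S(m)$ for every profile $m$. -/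
/-- The size `S(m) = ∑ k, k mₖ` of a finitely supported integer sequence. -/
def profileSize (m : ℕ →₀ ℤ) : ℤ := m.sum fun k v => (k : ℤ) * v

/-- The `a`-th entry (`a ≥ 1`) of `m^[p]`:
`∑_{-p < j < p} (p - |j|) m_{p a + j}` (with `m_i = 0` for `i ≤ 0`). -/
noncomputable def profilePow (m : ℕ →₀ ℤ) (p : ℕ) (a : ℕ) : ℤ :=
  ∑ j ∈ Finset.Ioo (-(p : ℤ)) (p : ℤ), ((p : ℤ) - |j|) * m ((p * a + j).toNat)

/-!
Both `S` and `m ↦ m^[p]` are additive, so it suffices to treat `m = e_k`. Writing `k = q p + r`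
with `0 ≤ r < p`, the only `a` with `|k - p a| < p` are `q` and `q + 1`, so
`e_k^[p] = (p - r) e_q + r e_{q+1}`, of size `(p - r) q + r (q + 1) = k`. When `q = 0` the entry
at index `0` has to be dropped, which is harmless since it has weight `0` in `S`.
-/

open Finsupp

lemma profileSize_add (m₁ m₂ : ℕ →₀ ℤ) :
    profileSize (m₁ + m₂) = profileSize m₁ + profileSize m₂ :=
  sum_add_index' (fun _ => mul_zero _) fun _ _ _ => mul_add _ _ _

lemma profileSize_single (k : ℕ) (c : ℤ) : profileSize (single k c) = k * c :=
  sum_single_index (mul_zero _)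

lemma profileSize_erase_zero (m : ℕ →₀ ℤ) : profileSize (m.erase 0) = profileSize m := by
  conv_rhs => rw [← single_add_erase 0 m]
  simp [profileSize_add, profileSize_single]

lemma profilePow_zero (p a : ℕ) : profilePow 0 p a = 0 := by
  simp [profilePow]

lemma profilePow_add (m₁ m₂ : ℕ →₀ ℤ) (p a : ℕ) :
    profilePow (m₁ + m₂) p a = profilePow m₁ p a + profilePow m₂ p a := by
  simp only [profilePow, coe_add, Pi.add_apply, mul_add, Finset.sum_add_distrib]

def tent (p : ℕ) (x : ℤ) : ℤ :=
  if |x| < p then p - |x| else 0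

lemma profilePow_single {p a : ℕ} (ha : 1 ≤ a) (k : ℕ) (c : ℤ) :
    profilePow (single k c) p a = tent p (k - p * a) * c := by
  have hidx : ∀ j ∈ Finset.Ioo (-(p : ℤ)) p,
      (k = ((p : ℤ) * a + j).toNat ↔ (k : ℤ) - p * a = j) := by
    intro j hj
    rw [Finset.mem_Ioo] at hj
    have : (p : ℤ) ≤ p * a := le_mul_of_one_le_right (by positivity) (by exact_mod_cast ha)
    omega
  simp only [tent, abs_lt, ← Finset.mem_Ioo]
  rw [ite_zero_mul, profilePow, ← Finset.sum_ite_eq _ _ fun j => ((p : ℤ) - |j|) * c]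
  refine Finset.sum_congr rfl fun j hj => ?_
  rw [single_apply]
  by_cases h : (k : ℤ) - p * a = j
  · rw [if_pos ((hidx j hj).2 h), if_pos h]
  · rw [if_neg (mt (hidx j hj).1 h), if_neg h, mul_zero]

lemma tent_mul_add_sub_mul {p r : ℕ} (hr : r < p) (q a : ℕ) :
    tent p ((p * q + r : ℕ) - p * a) =
      (if q = a then (p : ℤ) - r else 0) + (if q + 1 = a then (r : ℤ) else 0) := by
  simp only [tent, abs_lt]
  obtain h | rfl | rfl | h : a + 1 ≤ q ∨ a = q ∨ a = q + 1 ∨ q + 2 ≤ a := by omega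
  · have : (p : ℤ) * (a + 1) ≤ p * q := by gcongr; exact_mod_cast h
    rw [if_neg, if_neg (by omega), if_neg (by omega)]
    · simp
    · push_cast; intro h; linarith [h.2]
  · have e : ((p * a + r : ℕ) : ℤ) - p * a = r := by push_cast; ring
    rw [e, if_pos (by omega), if_pos rfl, if_neg (by omega)]
    simp
  · have e : ((p * q + r : ℕ) : ℤ) - p * (q + 1 : ℕ) = r - p := by push_cast; ring
    rw [e, if_neg (by omega : q ≠ q + 1), if_pos rfl, abs_of_neg (by omega)]
    -- for `r = 0` the point `r - p = -p` is the edge of the tent, where both sides vanish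
    split_ifs with hIoo
    · ring
    · omega
  · have : (p : ℤ) * (q + 2) ≤ p * a := by gcongr; exact_mod_cast h
    rw [if_neg, if_neg (by omega), if_neg (by omega)]
    · simp
    · push_cast; intro h; linarith [h.1]

noncomputable def profilePowFinsupp (m : ℕ →₀ ℤ) (p : ℕ) : ℕ →₀ ℤ :=
  m.sum fun k c => single (k / p) (c * (p - (k % p : ℕ))) + single (k / p + 1) (c * (k % p : ℕ))

lemma profilePowFinsupp_add (m₁ m₂ : ℕ →₀ ℤ) (p : ℕ) :
    profilePowFinsupp (m₁ + m₂) p = profilePowFinsupp m₁ p + profilePowFinsupp m₂ p :=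
  sum_add_index' (fun _ => by simp) fun _ _ _ => by simp only [add_mul, single_add]; abel

lemma profilePowFinsupp_single (k : ℕ) (c : ℤ) (p : ℕ) :
    profilePowFinsupp (single k c) p =
      single (k / p) (c * (p - (k % p : ℕ))) + single (k / p + 1) (c * (k % p : ℕ)) :=
  sum_single_index (by simp)

lemma profileSize_profilePowFinsupp (m : ℕ →₀ ℤ) (p : ℕ) :
    profileSize (profilePowFinsupp m p) = profileSize m := by
  induction m using Finsupp.induction_linear with
  | zero => simp [profilePowFinsupp]
  | add m₁ m₂ h₁ h₂ => rw [profilePowFinsupp_add, profileSize_add, profileSize_add, h₁, h₂]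
  | single k c =>
    have hk : (p : ℤ) * (k / p : ℕ) + (k % p : ℕ) = k := by exact_mod_cast Nat.div_add_mod k p
    rw [profilePowFinsupp_single, profileSize_add, profileSize_single, profileSize_single,
      profileSize_single, Nat.cast_succ]
    linear_combination c * hk

lemma profilePowFinsupp_apply {p a : ℕ} (hp : 1 ≤ p) (ha : 1 ≤ a) (m : ℕ →₀ ℤ) :
    profilePowFinsupp m p a = profilePow m p a := by
  induction m using Finsupp.induction_linear with
  | zero => simp [profilePowFinsupp, profilePow_zero]
  | add m₁ m₂ h₁ h₂ => rw [profilePowFinsupp_add, profilePow_add, Finsupp.add_apply, h₁, h₂]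
  | single k c =>
    have hk := tent_mul_add_sub_mul (Nat.mod_lt k hp) (k / p) a
    rw [Nat.div_add_mod] at hk
    rw [profilePowFinsupp_single, profilePow_single ha, hk, Finsupp.add_apply, single_apply,
      single_apply]
    split_ifs <;> ring

theorem stmt14_general (p : ℕ) (hp : 1 ≤ p) (m : ℕ →₀ ℤ) :
    ∃ M : ℕ →₀ ℤ, M 0 = 0 ∧ (∀ a : ℕ, 1 ≤ a → M a = profilePow m p a) ∧
      profileSize M = profileSize m :=
  ⟨(profilePowFinsupp m p).erase 0, erase_same,
    fun a ha => by rw [erase_ne (by omega), profilePowFinsupp_apply hp ha],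
    by rw [profileSize_erase_zero, profileSize_profilePowFinsupp]⟩

/-- `S(m^[p]) = S(m)` for every profile `m` (a finitely supported sequence of integers
indexed by positive integers, i.e. with `m 0 = 0`). -/
theorem stmt14 (p : ℕ) (hp : 1 ≤ p) (m : ℕ →₀ ℤ) (hm0 : m 0 = 0) :
    ∃ M : ℕ →₀ ℤ, M 0 = 0 ∧ (∀ a : ℕ, 1 ≤ a → M a = profilePow m p a) ∧
      profileSize M = profileSize m :=
  stmt14_general p hp m
end

section
/- Let $E = \begin{pmatrix} 0 & 0 & 1 \\ 0 & 0 & 0 \\ 0 & 0 & 0 \end{pmatrix} \in M_3(\mathbb{C})$. Then the set of square roots of $E$ is exactly the set of matrices of the form $\begin{pmatrix} 0 & x & y \\ 0 & 0 & x^{-1} \\ 0 & 0 & 0 \end{pmatrix}$ with $x \in \mathbb{C} \setminus \{0\}$ and $y \in \mathbb{C}$; consequently $E^{1/2}$ is homeomorphic to $(\mathbb{C} \setminus \{0\}) \times \mathbb{C}$. -/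
/-!
A square root `X` of `E` commutes with `X ^ 2 = E`. Since `X * E` is the first column of `X`
moved to the last one and `E * X` is the last row of `X` moved to the first one, `X` is upper
triangular with `X 0 0 = X 2 2`. The diagonal of `X ^ 2 = E` then forces `X` to be strictly upper
triangular, and its `(0, 2)` entry reads `X 0 1 * X 1 2 = 1`.

The entries `X 0 1 ≠ 0` and `X 0 2` are continuous coordinates on the set of roots, with inverse
`(x, y) ↦ !![0,x,y; 0,0,x⁻¹; 0,0,0]`, which is continuous because inversion is continuous away
from `0`.
-/

open Matrix Topology

section

variable {K : Type*} [Field K]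

theorem sq_eq_single_zero_two_iff (X : Matrix (Fin 3) (Fin 3) K) :
    X ^ 2 = !![0,0,1; 0,0,0; 0,0,0] ↔ ∃ x y : K, x ≠ 0 ∧ X = !![0,x,y; 0,0,x⁻¹; 0,0,0] := by
  constructor
  · intro hX
    have hc : X * !![0,0,1; 0,0,0; 0,0,0] = !![0,0,1; 0,0,0; 0,0,0] * X := by
      rw [← hX]; exact (Commute.self_pow X 2).eq
    obtain ⟨a, b, c, d, e, f, g, h, i, rfl⟩ :
        ∃ a b c d e f g h i, X = !![a,b,c; d,e,f; g,h,i] :=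
      ⟨_, _, _, _, _, _, _, _, _, eta_fin_three X⟩
    rw [pow_two, mul_fin_three] at hX
    rw [mul_fin_three, mul_fin_three] at hc
    simp only [EmbeddingLike.apply_eq_iff_eq, vecCons_inj, and_true] at hX hc
    simp only [mul_zero, zero_mul, add_zero, zero_add, mul_one, one_mul] at hc
    obtain ⟨⟨rfl, rfl, rfl⟩, ⟨-, -, rfl⟩, -⟩ := hc
    simp only [mul_zero, zero_mul, add_zero, zero_add, mul_self_eq_zero] at hX
    obtain ⟨⟨rfl, -, hbf⟩, ⟨-, rfl, -⟩, -⟩ := hX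
    simp only [zero_mul, mul_zero, add_zero, zero_add] at hbf
    exact ⟨b, c, left_ne_zero_of_mul_eq_one hbf, by rw [eq_inv_of_mul_eq_one_right hbf]⟩
  · rintro ⟨x, y, hx, rfl⟩
    rw [pow_two, mul_fin_three]
    simp [hx]

def sqrtParam (p : {x : K // x ≠ 0} × K) : Matrix (Fin 3) (Fin 3) K :=
  !![0, p.1, p.2; 0, 0, (p.1 : K)⁻¹; 0, 0, 0]

theorem range_sqrtParam :
    Set.range (sqrtParam (K := K)) =
      {X | ∃ x y : K, x ≠ 0 ∧ X = !![0,x,y; 0,0,x⁻¹; 0,0,0]} := by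
  ext X
  constructor
  · rintro ⟨⟨x, y⟩, rfl⟩
    exact ⟨x, y, x.2, rfl⟩
  · rintro ⟨x, y, hx, rfl⟩
    exact ⟨(⟨x, hx⟩, y), rfl⟩

variable [TopologicalSpace K] [ContinuousInv₀ K]

theorem continuous_sqrtParam : Continuous (sqrtParam (K := K)) := by
  refine continuous_matrix fun i j => ?_
  fin_cases i <;> fin_cases j <;> simp [sqrtParam] <;> fun_prop (disch := exact fun p => p.1.2)

theorem isEmbedding_sqrtParam : IsEmbedding (sqrtParam (K := K)) :=
  .of_comp (g := fun X : Matrix (Fin 3) (Fin 3) K => (X 0 1, X 0 2)) continuous_sqrtParam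
    (by fun_prop) (IsEmbedding.subtypeVal.prodMap .id)

end

/-- The set of complex square roots of `E = !![0,0,1; 0,0,0; 0,0,0]` is exactly the set of
matrices `!![0,x,y; 0,0,x⁻¹; 0,0,0]` with `x ≠ 0`, and it is homeomorphic to
`(ℂ \ {0}) × ℂ`. -/
theorem stmt18 :
    {X : Matrix (Fin 3) (Fin 3) ℂ | X ^ 2 = !![0,0,1; 0,0,0; 0,0,0]} =
      {X : Matrix (Fin 3) (Fin 3) ℂ |
        ∃ x y : ℂ, x ≠ 0 ∧ X = !![0,x,y; 0,0,x⁻¹; 0,0,0]} ∧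
    Nonempty
      (({X : Matrix (Fin 3) (Fin 3) ℂ | X ^ 2 = !![0,0,1; 0,0,0; 0,0,0]} :
          Set (Matrix (Fin 3) (Fin 3) ℂ)) ≃ₜ ({x : ℂ // x ≠ 0} × ℂ)) := by
  have hroots : {X : Matrix (Fin 3) (Fin 3) ℂ | X ^ 2 = !![0,0,1; 0,0,0; 0,0,0]} =
      {X | ∃ x y : ℂ, x ≠ 0 ∧ X = !![0,x,y; 0,0,x⁻¹; 0,0,0]} :=
    Set.ext sq_eq_single_zero_two_iff
  refine ⟨hroots, ⟨?_⟩⟩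
  exact (Homeomorph.setCongr (hroots.trans range_sqrtParam.symm)).trans
    isEmbedding_sqrtParam.toHomeomorph.symm
end

section
/- Let $E = \begin{pmatrix} 0 & 0 & 1 \\ 0 & 0 & 0 \\ 0 & 0 & 0 \end{pmatrix} \in M_3(\mathbb{R})$. Then the set of real square roots of $E$ is homeomorphic to $(\mathbb{R} \setminus \{0\}) \times \mathbb{R}$, and in particular has exactly two path-connected components. -/
noncomputable abbrev Mxy (x y : ℝ) : Matrix (Fin 3) (Fin 3) ℝ :=
  !![0, x, y; 0, 0, x⁻¹; 0, 0, 0]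

attribute [local simp] Matrix.vecHead Matrix.vecTail Function.comp

lemma Mxy_sq (x y : ℝ) (hx : x ≠ 0) : Mxy x y ^ 2 = !![0,0,1; 0,0,0; 0,0,0] := by
  ext i j
  fin_cases i <;> fin_cases j <;>
    simp [pow_two, Matrix.mul_apply, Fin.sum_univ_three, hx]

lemma sq_char (X : Matrix (Fin 3) (Fin 3) ℝ)
    (h : X ^ 2 = !![0,0,1; 0,0,0; 0,0,0]) :
    X 0 1 ≠ 0 ∧ X = Mxy (X 0 1) (X 0 2) := by
  have h2 : X * X = !![0,0,1; 0,0,0; 0,0,0] := by rw [← pow_two]; exact h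
  have hc : X * !![(0:ℝ),0,1; 0,0,0; 0,0,0] = !![(0:ℝ),0,1; 0,0,0; 0,0,0] * X := by
    rw [← h2, ← mul_assoc, mul_assoc]
  have e10 : X 1 0 = 0 := by
    have := congrFun (congrFun hc 1) 2
    simp [Matrix.mul_apply, Fin.sum_univ_three] at this
    linarith
  have e20 : X 2 0 = 0 := by
    have := congrFun (congrFun hc 2) 2
    simp [Matrix.mul_apply, Fin.sum_univ_three] at this
    linarith
  have e21 : X 2 1 = 0 := by
    have := congrFun (congrFun hc 0) 1
    simp [Matrix.mul_apply, Fin.sum_univ_three] at this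
    linarith
  have e22 : X 2 2 = X 0 0 := by
    have := congrFun (congrFun hc 0) 2
    simp [Matrix.mul_apply, Fin.sum_univ_three] at this
    linarith
  have e00 : X 0 0 = 0 := by
    have := congrFun (congrFun h2 0) 0
    simp [Matrix.mul_apply, Fin.sum_univ_three, e10, e20] at this
    nlinarith [this]
  have e11 : X 1 1 = 0 := by
    have := congrFun (congrFun h2 1) 1
    simp [Matrix.mul_apply, Fin.sum_univ_three, e10, e21] at this
    nlinarith [this]
  have e02 : X 0 1 * X 1 2 = 1 := by
    have := congrFun (congrFun h2 0) 2
    simp [Matrix.mul_apply, Fin.sum_univ_three, e00, e22] at this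
    linarith
  have hx : X 0 1 ≠ 0 := by
    intro h0; rw [h0, zero_mul] at e02; exact one_ne_zero e02.symm
  refine ⟨hx, ?_⟩
  have e12 : X 1 2 = (X 0 1)⁻¹ := by
    field_simp
    linarith [e02]
  ext i j
  fin_cases i <;> fin_cases j <;>
    simp [e10, e20, e21, e00, e11, e12, e22]

lemma Mxy_cont : Continuous fun p : {x : ℝ // x ≠ 0} × ℝ => Mxy p.1.1 p.2 := by
  apply continuous_matrix
  intro i j
  have hv : Continuous fun p : {x : ℝ // x ≠ 0} × ℝ => (p.1 : ℝ) :=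
    continuous_subtype_val.comp continuous_fst
  have hinv : Continuous fun p : {x : ℝ // x ≠ 0} × ℝ => (p.1 : ℝ)⁻¹ :=
    hv.inv₀ fun p => p.1.2
  fin_cases i <;> fin_cases j <;>
    simp only [Mxy, Matrix.cons_val', Matrix.cons_val_zero, Matrix.cons_val_one,
      Matrix.head_cons, Matrix.empty_val', Matrix.cons_val_fin_one, Matrix.head_fin_const,
      Fin.mk_zero, Fin.mk_one, Matrix.cons_val_two, Matrix.tail_cons] <;>
    first
      | exact continuous_const
      | exact hv
      | exact continuous_snd
      | exact hinv

lemma Mxy_pathconn (f : ℝ → ℝ) (hf : Continuous f) (hne : ∀ t, f t ≠ 0) :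
    IsPathConnected ((fun p : ℝ × ℝ => Mxy (f p.1) p.2) '' Set.univ) := by
  refine (isPathConnected_univ).image ?_
  apply continuous_matrix
  intro i j
  have he : Continuous fun p : ℝ × ℝ => f p.1 := hf.comp continuous_fst
  have hinv : Continuous fun p : ℝ × ℝ => (f p.1)⁻¹ := he.inv₀ fun p => hne p.1
  fin_cases i <;> fin_cases j <;>
    simp only [Mxy, Matrix.cons_val', Matrix.cons_val_zero, Matrix.cons_val_one,
      Matrix.head_cons, Matrix.empty_val', Matrix.cons_val_fin_one, Matrix.head_fin_const,
      Fin.mk_zero, Fin.mk_one, Matrix.cons_val_two, Matrix.tail_cons] <;>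
    first
      | exact continuous_const
      | exact he
      | exact continuous_snd
      | exact hinv

/-- The set of real square roots of `E = !![0,0,1; 0,0,0; 0,0,0]` is homeomorphic to
`(ℝ \ {0}) × ℝ`, and has exactly two path-connected components. -/
theorem stmt19 :
    Nonempty
      (({X : Matrix (Fin 3) (Fin 3) ℝ | X ^ 2 = !![0,0,1; 0,0,0; 0,0,0]} :
          Set (Matrix (Fin 3) (Fin 3) ℝ)) ≃ₜ ({x : ℝ // x ≠ 0} × ℝ)) ∧
    ∃ A B : Set (Matrix (Fin 3) (Fin 3) ℝ),
      A.Nonempty ∧ B.Nonempty ∧ IsPathConnected A ∧ IsPathConnected B ∧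
      Disjoint A B ∧
      A ∪ B = {X : Matrix (Fin 3) (Fin 3) ℝ | X ^ 2 = !![0,0,1; 0,0,0; 0,0,0]} ∧
      ∀ a ∈ A, ∀ b ∈ B,
        ¬ JoinedIn {X : Matrix (Fin 3) (Fin 3) ℝ | X ^ 2 = !![0,0,1; 0,0,0; 0,0,0]} a b := by
  set S : Set (Matrix (Fin 3) (Fin 3) ℝ) :=
    {X : Matrix (Fin 3) (Fin 3) ℝ | X ^ 2 = !![0,0,1; 0,0,0; 0,0,0]} with hS
  constructor
  · refine ⟨{
      toFun := fun X => (⟨X.1 0 1, (sq_char X.1 X.2).1⟩, X.1 0 2)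
      invFun := fun p => ⟨Mxy p.1.1 p.2, Mxy_sq p.1.1 p.2 p.1.2⟩
      left_inv := ?_
      right_inv := ?_
      continuous_toFun := ?_
      continuous_invFun := ?_ }⟩
    · intro X
      ext i j
      exact (congrFun (congrFun (sq_char X.1 X.2).2 i) j).symm
    · intro p
      ext <;> simp
    · refine Continuous.prodMk (Continuous.subtype_mk ?_ _) ?_
      · exact continuous_subtype_val.matrix_elem 0 1
      · exact continuous_subtype_val.matrix_elem 0 2
    · exact Mxy_cont.subtype_mk _
  · refine ⟨(fun p : ℝ × ℝ => Mxy (Real.exp p.1) p.2) '' Set.univ,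
      (fun p : ℝ × ℝ => Mxy (-Real.exp p.1) p.2) '' Set.univ,
      ⟨_, ⟨(0, 0), Set.mem_univ _, rfl⟩⟩, ⟨_, ⟨(0, 0), Set.mem_univ _, rfl⟩⟩, ?_, ?_, ?_, ?_, ?_⟩
    · exact Mxy_pathconn _ Real.continuous_exp fun t => (Real.exp_pos t).ne'
    · exact Mxy_pathconn _ Real.continuous_exp.neg
        fun t => neg_ne_zero.mpr (Real.exp_pos t).ne'
    · -- disjoint
      rw [Set.disjoint_left]
      rintro a ⟨p, -, rfl⟩ ⟨q, -, hq⟩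
      have h2 : -Real.exp q.1 = Real.exp p.1 := by
        have := congrFun (congrFun hq 0) 1
        simpa using this
      nlinarith [Real.exp_pos p.1, Real.exp_pos q.1]
    · -- union
      apply Set.eq_of_subset_of_subset
      · rintro X (⟨p, -, rfl⟩ | ⟨p, -, rfl⟩)
        · exact Mxy_sq _ _ (Real.exp_pos p.1).ne'
        · exact Mxy_sq _ _ (neg_ne_zero.mpr (Real.exp_pos p.1).ne')
      · intro X hX
        obtain ⟨hx, hXeq⟩ := sq_char X hX
        rcases lt_or_gt_of_ne hx with hneg | hpos
        · right
          refine ⟨(Real.log (-(X 0 1)), X 0 2), Set.mem_univ _, ?_⟩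
          show Mxy (-Real.exp (Real.log (-(X 0 1)))) (X 0 2) = X
          rw [Real.exp_log (by linarith), neg_neg, ← hXeq]
        · left
          refine ⟨(Real.log (X 0 1), X 0 2), Set.mem_univ _, ?_⟩
          show Mxy (Real.exp (Real.log (X 0 1))) (X 0 2) = X
          rw [Real.exp_log hpos, ← hXeq]
    · -- not joined
      rintro a ⟨p, -, rfl⟩ b ⟨q, -, rfl⟩ hj
      obtain ⟨γ, hγ⟩ := hj
      set f : unitInterval → ℝ := fun t => (γ t) 0 1 with hf
      have hfc : Continuous f := γ.continuous.matrix_elem 0 1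
      have hne : ∀ t, f t ≠ 0 := fun t => (sq_char _ (hγ t)).1
      have h0 : f 0 = Real.exp p.1 := by simp [hf, γ.source]
      have h1 : f 1 = -Real.exp q.1 := by simp [hf, γ.target]
      have hiv : (0:ℝ) ∈ Set.range f := by
        apply intermediate_value_univ (a := (1 : unitInterval)) (b := 0) hfc
        rw [h0, h1]
        constructor
        · linarith [Real.exp_pos q.1]
        · linarith [Real.exp_pos p.1]
      obtain ⟨t, ht⟩ := hiv
      exact hne t ht
end
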